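/- arXiv:1409.1154 — 2 statements merged into one kernel-verified Lean document; each statement's English description precedes it below -/
import Mathlib

section
/- Let λ, a, b, β be real smooth functions of (y,t) satisfying λ_t + λ·λ_y - a·a_y = 0, a_t + (λ·a)_y = 0, b_t + λ·b_y + a·β_y = 0, β_t + λ·β_y - a·b_y = 0 (focusing case). Define w := λ + i·a and ζ := b - i·β. Then w satisfies the complex Riemann equation w_t + w·w_y = 0 and ζ satisfies ζ_t + w·ζ_y = 0. -/
/-- Partial derivative in `y` (first variable) of a function of `(y,t)`. -/
noncomputable def pdy {E : Type*} [NormedAddCommGroup E] [NormedSpace ℝ E]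
    (f : ℝ → ℝ → E) : ℝ → ℝ → E := fun y t => deriv (fun s => f s t) y

/-- Partial derivative in `t` (second variable) of a function of `(y,t)`. -/
noncomputable def pdt {E : Type*} [NormedAddCommGroup E] [NormedSpace ℝ E]
    (f : ℝ → ℝ → E) : ℝ → ℝ → E := fun y t => deriv (fun s => f y s) t

/-- Focusing case.  If real smooth `λ, a, b, β` satisfy
`λ_t + λλ_y - a a_y = 0`, `a_t + (λa)_y = 0`, `b_t + λ b_y + a β_y = 0`,
`β_t + λ β_y - a b_y = 0`, then `w := λ + i a` satisfies the complex Riemann equation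
`w_t + w w_y = 0` and `ζ := b - i β` satisfies `ζ_t + w ζ_y = 0`. -/
theorem stmt_12 (lam a b β : ℝ → ℝ → ℝ)
    (hlam : ContDiff ℝ (⊤ : ℕ∞) fun p : ℝ × ℝ => lam p.1 p.2)
    (ha : ContDiff ℝ (⊤ : ℕ∞) fun p : ℝ × ℝ => a p.1 p.2)
    (hb : ContDiff ℝ (⊤ : ℕ∞) fun p : ℝ × ℝ => b p.1 p.2)
    (hβ : ContDiff ℝ (⊤ : ℕ∞) fun p : ℝ × ℝ => β p.1 p.2)
    (h1 : ∀ y t, pdt lam y t + lam y t * pdy lam y t - a y t * pdy a y t = 0)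
    (h2 : ∀ y t, pdt a y t + pdy (fun y' t' => lam y' t' * a y' t') y t = 0)
    (h3 : ∀ y t, pdt b y t + lam y t * pdy b y t + a y t * pdy β y t = 0)
    (h4 : ∀ y t, pdt β y t + lam y t * pdy β y t - a y t * pdy b y t = 0)
    (w ζ : ℝ → ℝ → ℂ)
    (hw : ∀ y t, w y t = (lam y t : ℂ) + Complex.I * (a y t : ℂ))
    (hζ : ∀ y t, ζ y t = (b y t : ℂ) - Complex.I * (β y t : ℂ)) :
    (∀ y t, pdt w y t + w y t * pdy w y t = 0) ∧
    (∀ y t, pdt ζ y t + w y t * pdy ζ y t = 0) := by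
  have dy : ∀ (f : ℝ → ℝ → ℝ), ContDiff ℝ (⊤ : ℕ∞) (fun p : ℝ × ℝ => f p.1 p.2) →
      ∀ y t, HasDerivAt (fun s => f s t) (pdy f y t) y := by
    intro f hf y t
    exact (((hf.differentiable (by simp)).comp
      (differentiable_id.prodMk (differentiable_const t))) y).hasDerivAt
  have dt : ∀ (f : ℝ → ℝ → ℝ), ContDiff ℝ (⊤ : ℕ∞) (fun p : ℝ × ℝ => f p.1 p.2) →
      ∀ y t, HasDerivAt (fun s => f y s) (pdt f y t) t := by
    intro f hf y t
    exact (((hf.differentiable (by simp)).comp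
      ((differentiable_const y).prodMk differentiable_id)) t).hasDerivAt
  constructor
  · intro y t
    -- derivatives of w
    have hwy : pdy w y t = (Complex.ofReal (pdy lam y t)) + Complex.I * (Complex.ofReal (pdy a y t)) := by
      have : (fun s => w s t) = fun s => ((lam s t : ℂ) + Complex.I * (a s t : ℂ)) := by
        funext s; exact hw s t
      have hd := ((dy lam hlam y t).ofReal_comp.add
        (((dy a ha y t).ofReal_comp).const_mul Complex.I))
      rw [pdy, this]
      exact hd.deriv
    have hwt : pdt w y t = (Complex.ofReal (pdt lam y t)) + Complex.I * (Complex.ofReal (pdt a y t)) := by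
      have : (fun s => w y s) = fun s => ((lam y s : ℂ) + Complex.I * (a y s : ℂ)) := by
        funext s; exact hw y s
      have hd := ((dt lam hlam y t).ofReal_comp.add
        (((dt a ha y t).ofReal_comp).const_mul Complex.I))
      rw [pdt, this]
      exact hd.deriv
    have hprod : pdy (fun y' t' => lam y' t' * a y' t') y t
        = pdy lam y t * a y t + lam y t * pdy a y t := by
      exact ((dy lam hlam y t).mul (dy a ha y t)).deriv
    have e1 := h1 y t
    have e2 := h2 y t
    rw [hprod] at e2
    have c1 : (Complex.ofReal (pdt lam y t)) + lam y t * pdy lam y t - a y t * pdy a y t = 0 := by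
      exact_mod_cast congrArg (fun r : ℝ => (r : ℂ)) e1
    have c2 : (Complex.ofReal (pdt a y t)) + (pdy lam y t * a y t + lam y t * pdy a y t) = 0 := by
      exact_mod_cast congrArg (fun r : ℝ => (r : ℂ)) e2
    rw [hwy, hwt, hw y t]
    linear_combination (norm := (push_cast; ring)) c1 + Complex.I * c2 + (Complex.ofReal (a y t * pdy a y t)) * Complex.I_sq
  · intro y t
    have hζy : pdy ζ y t = (Complex.ofReal (pdy b y t)) - Complex.I * (Complex.ofReal (pdy β y t)) := by
      have : (fun s => ζ s t) = fun s => ((b s t : ℂ) - Complex.I * (β s t : ℂ)) := by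
        funext s; exact hζ s t
      have hd := ((dy b hb y t).ofReal_comp.sub
        (((dy β hβ y t).ofReal_comp).const_mul Complex.I))
      rw [pdy, this]
      exact hd.deriv
    have hζt : pdt ζ y t = (Complex.ofReal (pdt b y t)) - Complex.I * (Complex.ofReal (pdt β y t)) := by
      have : (fun s => ζ y s) = fun s => ((b y s : ℂ) - Complex.I * (β y s : ℂ)) := by
        funext s; exact hζ y s
      have hd := ((dt b hb y t).ofReal_comp.sub
        (((dt β hβ y t).ofReal_comp).const_mul Complex.I))
      rw [pdt, this]
      exact hd.deriv
    have c3 : (Complex.ofReal (pdt b y t)) + lam y t * pdy b y t + a y t * pdy β y t = 0 := by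
      exact_mod_cast congrArg (fun r : ℝ => (r : ℂ)) (h3 y t)
    have c4 : (Complex.ofReal (pdt β y t)) + lam y t * pdy β y t - a y t * pdy b y t = 0 := by
      exact_mod_cast congrArg (fun r : ℝ => (r : ℂ)) (h4 y t)
    rw [hζy, hζt, hw y t]
    linear_combination (norm := (push_cast; ring)) c3 - Complex.I * c4 - (Complex.ofReal (a y t * pdy β y t)) * Complex.I_sq
end

section
/- Let q, r, u, v be smooth complex (scalar) functions of (x,y) satisfying the DS Riemann system u_y - u_x + 2qr = 0, v_y + v_x + 2rq = 0, q_y - q_x + 2qv = 0, r_y + r_x + 2ru = 0 with r = -q̄ (focusing reduction, q nonvanishing). Then, in the characteristic coordinates x̃ = x+y, ỹ = x-y, the function w := log q satisfies the Liouville equation w_{x̃ỹ} = |q|² = e^{w + w̄}. -/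
/-- Partial derivative in `x` (first variable) of a function of `(x,y)`. -/
noncomputable def pdX (f : ℝ → ℝ → ℂ) : ℝ → ℝ → ℂ := fun x y => deriv (fun s => f s y) x

/-- Partial derivative in `y` (second variable) of a function of `(x,y)`. -/
noncomputable def pdY (f : ℝ → ℝ → ℂ) : ℝ → ℝ → ℂ := fun x y => deriv (fun s => f x s) y

/-- Partial derivative `∂_{x̃} = (∂_x + ∂_y)/2` in the characteristic coordinate
`x̃ = x + y`. -/
noncomputable def pdXt (f : ℝ → ℝ → ℂ) : ℝ → ℝ → ℂ :=
  fun x y => (pdX f x y + pdY f x y) / 2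

/-- Partial derivative `∂_{ỹ} = (∂_x - ∂_y)/2` in the characteristic coordinate
`ỹ = x - y`. -/
noncomputable def pdYt (f : ℝ → ℝ → ℂ) : ℝ → ℝ → ℂ :=
  fun x y => (pdX f x y - pdY f x y) / 2


lemma diffX (f : ℝ → ℝ → ℂ) (hf : ContDiff ℝ (⊤ : ℕ∞) fun p : ℝ × ℝ => f p.1 p.2) (x y : ℝ) :
    DifferentiableAt ℝ (fun s => f s y) x := by
  have h := (hf.differentiable (by simp)).comp
    ((differentiable_id.prodMk (differentiable_const y)) : Differentiable ℝ fun s : ℝ => (s, y))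
  exact h.differentiableAt

lemma diffY (f : ℝ → ℝ → ℂ) (hf : ContDiff ℝ (⊤ : ℕ∞) fun p : ℝ × ℝ => f p.1 p.2) (x y : ℝ) :
    DifferentiableAt ℝ (fun s => f x s) y := by
  have h := (hf.differentiable (by simp)).comp
    (((differentiable_const x).prodMk differentiable_id) : Differentiable ℝ fun s : ℝ => (x, s))
  exact h.differentiableAt

/-- For a solution of the scalar DS Riemann system with the focusing
reduction `r = -q̄` and `q` nonvanishing, any smooth logarithm `w` of `q` satisfies
the Liouville equation `w_{x̃ỹ} = |q|² = e^{w + w̄}` in characteristic coordinates. -/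
theorem stmt_16 (q r u v : ℝ → ℝ → ℂ)
    (hq : ContDiff ℝ (⊤ : ℕ∞) fun p : ℝ × ℝ => q p.1 p.2)
    (hu : ContDiff ℝ (⊤ : ℕ∞) fun p : ℝ × ℝ => u p.1 p.2)
    (hv : ContDiff ℝ (⊤ : ℕ∞) fun p : ℝ × ℝ => v p.1 p.2)
    (hq0 : ∀ x y, q x y ≠ 0)
    (hr : ∀ x y, r x y = -(starRingEnd ℂ) (q x y))
    (h1 : ∀ x y, pdY u x y - pdX u x y + 2 * q x y * r x y = 0)
    (h2 : ∀ x y, pdY v x y + pdX v x y + 2 * r x y * q x y = 0)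
    (h3 : ∀ x y, pdY q x y - pdX q x y + 2 * q x y * v x y = 0)
    (h4 : ∀ x y, pdY r x y + pdX r x y + 2 * r x y * u x y = 0)
    (w : ℝ → ℝ → ℂ)
    (hw_smooth : ContDiff ℝ (⊤ : ℕ∞) fun p : ℝ × ℝ => w p.1 p.2)
    (hw : ∀ x y, Complex.exp (w x y) = q x y) :
    ∀ x y,
      pdXt (pdYt w) x y = q x y * (starRingEnd ℂ) (q x y) ∧
      q x y * (starRingEnd ℂ) (q x y)
        = Complex.exp (w x y + (starRingEnd ℂ) (w x y)) := by
  have hqx : ∀ x y, pdX q x y = q x y * pdX w x y := by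
    intro x y
    have hd := (diffX w hw_smooth x y).hasDerivAt
    have h := hd.cexp
    have : (fun s => Complex.exp (w s y)) = fun s => q s y := funext fun s => hw s y
    rw [this] at h
    simpa [pdX, hw x y, mul_comm] using h.deriv
  have hqy : ∀ x y, pdY q x y = q x y * pdY w x y := by
    intro x y
    have hd := (diffY w hw_smooth x y).hasDerivAt
    have h := hd.cexp
    have : (fun s => Complex.exp (w x s)) = fun s => q x s := funext fun s => hw x s
    rw [this] at h
    simpa [pdY, hw x y, mul_comm] using h.deriv
  have hwy : pdYt w = v := by
    funext x y
    have h := h3 x y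
    rw [hqx, hqy] at h
    have : q x y * (pdY w x y - pdX w x y + 2 * v x y) = 0 := by ring_nf; ring_nf at h; linear_combination h
    have h2 := (mul_eq_zero.mp this).resolve_left (hq0 x y)
    simp only [pdYt]
    linear_combination (-1/2 : ℂ) * h2
  intro x y
  constructor
  · rw [hwy]
    have h := h2 x y
    rw [hr x y] at h
    simp only [pdXt]
    linear_combination (1/2 : ℂ) * h
  · rw [← hw x y, ← Complex.exp_conj, ← Complex.exp_add]
end
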